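/- Let (ξ^k) be a sequence of probability distributions on the positive integers and for each k let θ^k be the probability measure on [0,∞) with piecewise-constant density f_{θ^k} = Σ_{m≥1} ξ^k_m · 1_{[m−1,m)}. Then for every s ∈ [0,1] and every k, ∫_0^∞ |f_{θ^k}(t+s) − f_{θ^k}(t)| dt = s · Σ_{m≥1} |ξ^k_{m+1} − ξ^k_m|. Consequently, (θ^k) satisfies the long-term condition if and only if Σ_{m≥1} |ξ^k_{m+1} − ξ^k_m| → 0 as k → ∞. -/

import Mathlib

open MeasureTheory Set Filter

/-- The `s`-total variation of a Borel measure `θ` on `[0,∞)`: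
`TV_s(θ) = sup_{Q Borel ⊆ [0,∞)} |θ(Q) - θ(Q+s)|`. -/
noncomputable def TV (θ : Measure ℝ) (s : ℝ) : ℝ :=
  ⨆ Q : {Q : Set ℝ // MeasurableSet Q ∧ Q ⊆ Ici 0},
    |(θ Q.1).toReal - (θ ((fun x => x + s) '' Q.1)).toReal|

/-- The long-term condition for a sequence of measures on `[0,∞)`. -/
def LTC (θ : ℕ → Measure ℝ) : Prop :=
  ∀ S > (0:ℝ), Tendsto (fun k => ⨆ s : Icc (0:ℝ) S, TV (θ k) s) atTop (nhds 0)

/-! On `[m, m + 1)` the difference `f (t + s) - f t` of the step density vanishes except on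
`[m + 1 - s, m + 1)`, where it equals `ξ (m + 1) - ξ m`; summing over `m` gives the identity.
For a density `f ≥ 0` one has `θ Q - θ (Q + s) = ∫_Q (f - f (· + s))`, so `TV_s(θ)` lies between
`shiftL1 f s / 2` (take `Q = {f ≥ f (· + s)}` and its complement in `[0, ∞)`) and `shiftL1 f s`.
Finally `shiftL1 f` is subadditive, so the identity at `s ∈ [0, 1]` bounds `shiftL1 f s` by
`s * ∑ |ξ (m + 1) - ξ m|` for every `s ≥ 0`, and both directions of the equivalence follow. -/

noncomputable def shiftL1 (f : ℝ → ℝ) (s : ℝ) : ℝ := ∫ t in Ici 0, |f (t + s) - f t|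

theorem setIntegral_Ici_comp_add_right (g : ℝ → ℝ) (a c : ℝ) :
    ∫ t in Ici a, g (t + c) = ∫ t in Ici (a + c), g t := by
  rw [← image_add_const_Ici, (measurePreserving_add_right volume c).setIntegral_image_emb
    (measurableEmbedding_addRight c)]

theorem integrable_abs_comp_add_right_sub {f : ℝ → ℝ} (hf : Integrable f) (s : ℝ) :
    Integrable fun t => |f (t + s) - f t| :=
  ((hf.comp_add_right s).sub hf).abs

theorem shiftL1_add_le {f : ℝ → ℝ} (hf : Integrable f) (s : ℝ) {u : ℝ} (hu : 0 ≤ u) :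
    shiftL1 f (s + u) ≤ shiftL1 f s + shiftL1 f u := by
  have hshift : ∫ t in Ici 0, |f (t + u + s) - f (t + u)| ≤ shiftL1 f s := by
    rw [setIntegral_Ici_comp_add_right (fun t => |f (t + s) - f t|), zero_add]
    exact setIntegral_mono_set (integrable_abs_comp_add_right_sub hf s).integrableOn
      (Eventually.of_forall fun _ => abs_nonneg _) (Ici_subset_Ici.2 hu).eventuallyLE
  calc shiftL1 f (s + u)
      ≤ ∫ t in Ici 0, (|f (t + u + s) - f (t + u)| + |f (t + u) - f t|) := by
        refine setIntegral_mono (integrable_abs_comp_add_right_sub hf _).integrableOn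
          (((integrable_abs_comp_add_right_sub hf s).comp_add_right u).add
            (integrable_abs_comp_add_right_sub hf u)).integrableOn fun t => ?_
        rw [add_comm s u, ← add_assoc]
        exact abs_sub_le _ _ _
    _ = (∫ t in Ici 0, |f (t + u + s) - f (t + u)|) + shiftL1 f u :=
        integral_add ((integrable_abs_comp_add_right_sub hf s).comp_add_right u).integrableOn
          (integrable_abs_comp_add_right_sub hf u).integrableOn
    _ ≤ shiftL1 f s + shiftL1 f u := by linarith

theorem TV_nonneg (θ : Measure ℝ) (s : ℝ) : 0 ≤ TV θ s :=
  Real.iSup_nonneg fun _ => abs_nonneg _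

instance : Nonempty {Q : Set ℝ // MeasurableSet Q ∧ Q ⊆ Ici 0} :=
  ⟨⟨∅, .empty, empty_subset _⟩⟩

theorem abs_sub_le_TV (θ : Measure ℝ) [IsFiniteMeasure θ] {Q : Set ℝ} (hQ : MeasurableSet Q)
    (hQ0 : Q ⊆ Ici 0) (s : ℝ) :
    |(θ Q).toReal - (θ ((fun x => x + s) '' Q)).toReal| ≤ TV θ s := by
  refine le_ciSup (f := fun Q : {Q : Set ℝ // MeasurableSet Q ∧ Q ⊆ Ici 0} =>
    |(θ Q.1).toReal - (θ ((fun x => x + s) '' Q.1)).toReal|) ⟨θ.real univ, ?_⟩ ⟨Q, hQ, hQ0⟩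
  rintro _ ⟨Q, rfl⟩
  exact abs_sub_le_of_nonneg_of_le measureReal_nonneg (measureReal_mono (subset_univ _))
    measureReal_nonneg (measureReal_mono (subset_univ _))

section Density

variable {f : ℝ → ℝ}

theorem withDensity_image_add_right (s : ℝ) {Q : Set ℝ} (hQ : MeasurableSet Q) :
    volume.withDensity (fun t => ENNReal.ofReal (f t)) ((fun x => x + s) '' Q) =
      volume.withDensity (fun t => ENNReal.ofReal (f (t + s))) Q := by
  rw [withDensity_apply _ ((measurableEmbedding_addRight s).measurableSet_image.2 hQ),
    withDensity_apply _ hQ, ← (measurePreserving_add_right volume s).setLIntegral_comp_emb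
    (measurableEmbedding_addRight s)]

theorem toReal_withDensity_ofReal (hf : Integrable f) (hf0 : 0 ≤ f) (Q : Set ℝ) :
    (volume.withDensity (fun t => ENNReal.ofReal (f t)) Q).toReal = ∫ t in Q, f t := by
  rw [withDensity_apply' _ Q, ← ofReal_integral_eq_lintegral_ofReal hf.integrableOn
    (Eventually.of_forall hf0), ENNReal.toReal_ofReal (integral_nonneg hf0)]

theorem toReal_withDensity_sub_image_add (hf : Integrable f) (hf0 : 0 ≤ f) {Q : Set ℝ}
    (hQ : MeasurableSet Q) (s : ℝ) :
    (volume.withDensity (fun t => ENNReal.ofReal (f t)) Q).toReal -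
        (volume.withDensity (fun t => ENNReal.ofReal (f t)) ((fun x => x + s) '' Q)).toReal =
      ∫ t in Q, (f t - f (t + s)) := by
  rw [withDensity_image_add_right s hQ, toReal_withDensity_ofReal hf hf0,
    toReal_withDensity_ofReal (hf.comp_add_right s) (fun t => hf0 (t + s)),
    integral_sub hf.integrableOn (hf.comp_add_right s).integrableOn]

theorem TV_withDensity_le_shiftL1 (hf : Integrable f) (hf0 : 0 ≤ f) (s : ℝ) :
    TV (volume.withDensity (fun t => ENNReal.ofReal (f t))) s ≤ shiftL1 f s := by
  refine ciSup_le fun ⟨Q, hQ, hQ0⟩ => ?_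
  rw [toReal_withDensity_sub_image_add hf hf0 hQ]
  calc |∫ t in Q, (f t - f (t + s))|
      ≤ ∫ t in Q, |f t - f (t + s)| := abs_integral_le_integral_abs
    _ = ∫ t in Q, |f (t + s) - f t| := by simp_rw [abs_sub_comm]
    _ ≤ shiftL1 f s := setIntegral_mono_set (integrable_abs_comp_add_right_sub hf s).integrableOn
        (Eventually.of_forall fun _ => abs_nonneg _) hQ0.eventuallyLE

theorem shiftL1_le_two_mul_TV_withDensity (hfm : Measurable f) (hf : Integrable f)
    (hf0 : 0 ≤ f) (s : ℝ) :
    shiftL1 f s ≤ 2 * TV (volume.withDensity (fun t => ENNReal.ofReal (f t))) s := by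
  have := isFiniteMeasure_withDensity_ofReal hf.2
  set h : ℝ → ℝ := fun t => f t - f (t + s)
  have hh : Measurable h := hfm.sub (hfm.comp (measurable_add_const s))
  have hpos : MeasurableSet {t | 0 ≤ h t} := measurableSet_le measurable_const hh
  have hneg : MeasurableSet {t | h t ≤ 0} := measurableSet_le hh measurable_const
  have hsplit : shiftL1 f s =
      (∫ t in {t | 0 ≤ h t} ∩ Ici 0, h t) - ∫ t in {t | h t ≤ 0} ∩ Ici 0, h t := by
    have := integral_norm_eq_pos_sub_neg (μ := volume.restrict (Ici 0)) (f := h)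
      (hf.sub (hf.comp_add_right s)).integrableOn
    rw [Measure.restrict_restrict hpos, Measure.restrict_restrict hneg] at this
    rw [← this, shiftL1]
    simp_rw [h, Real.norm_eq_abs, abs_sub_comm]
  have hTV : ∀ Q ⊆ Ici 0, MeasurableSet Q →
      |∫ t in Q, h t| ≤ TV (volume.withDensity (fun t => ENNReal.ofReal (f t))) s :=
    fun Q hQ0 hQ => by
      rw [← toReal_withDensity_sub_image_add hf hf0 hQ]
      exact abs_sub_le_TV _ hQ hQ0 s
  have hTVpos := abs_le.1 (hTV _ inter_subset_right (hpos.inter measurableSet_Ici))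
  have hTVneg := abs_le.1 (hTV _ inter_subset_right (hneg.inter measurableSet_Ici))
  linarith [hTVpos.2, hTVneg.1]

end Density

noncomputable def stepFun (g : ℕ → ℝ) (t : ℝ) : ℝ := if 0 ≤ t then g ⌊t⌋₊ else 0

noncomputable def jumpSum (g : ℕ → ℝ) : ℝ := ∑' m, |g (m + 1) - g m|

theorem iUnion_Ico_natCast : ⋃ m : ℕ, Ico (m : ℝ) (m + 1) = Ici 0 := by
  ext t
  simp only [mem_iUnion, mem_Ico, mem_Ici]
  refine ⟨fun ⟨m, hm, _⟩ => (Nat.cast_nonneg m).trans hm, fun ht => ?_⟩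
  exact ⟨⌊t⌋₊, Nat.floor_le ht, Nat.lt_floor_add_one t⟩

theorem pairwise_disjoint_Ico_natCast :
    Pairwise (Function.onFun Disjoint fun m : ℕ => Ico (m : ℝ) (m + 1)) := by
  intro i j hij
  simpa [Function.onFun] using pairwise_disjoint_Ico_intCast ℝ (Int.natCast_inj.not.2 hij)

theorem setLIntegral_Ici_zero_eq_tsum (h : ℝ → ENNReal) :
    ∫⁻ t in Ici 0, h t = ∑' m : ℕ, ∫⁻ t in Ico (m : ℝ) (m + 1), h t := by
  rw [← iUnion_Ico_natCast,
    lintegral_iUnion (fun _ => measurableSet_Ico) pairwise_disjoint_Ico_natCast]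

theorem summable_abs_sub_succ {g : ℕ → ℝ} (hg : Summable g) :
    Summable fun m => |g (m + 1) - g m| :=
  (((summable_nat_add_iff 1).2 hg).sub hg).abs

theorem jumpSum_nonneg (g : ℕ → ℝ) : 0 ≤ jumpSum g :=
  tsum_nonneg fun _ => abs_nonneg _

section StepFun

variable (g : ℕ → ℝ)

theorem stepFun_of_mem_Ico {m : ℕ} {t : ℝ} (ht : t ∈ Ico (m : ℝ) (m + 1)) :
    stepFun g t = g m := by
  have ht0 : 0 ≤ t := (Nat.cast_nonneg m).trans ht.1
  rw [stepFun, if_pos ht0, (Nat.floor_eq_iff ht0).2 ht]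

theorem stepFun_of_neg {t : ℝ} (ht : t < 0) : stepFun g t = 0 :=
  if_neg ht.not_ge

theorem measurable_stepFun : Measurable (stepFun g) :=
  Measurable.ite measurableSet_Ici (measurable_from_top.comp Nat.measurable_floor)
    measurable_const

theorem lintegral_enorm_stepFun : ∫⁻ t, ‖stepFun g t‖ₑ = ∑' m, ‖g m‖ₑ := by
  rw [← lintegral_add_compl _ (measurableSet_Ici (a := (0 : ℝ))), setLIntegral_Ici_zero_eq_tsum,
    setLIntegral_congr_fun measurableSet_Ici.compl
      (fun t ht => by rw [stepFun_of_neg g (not_le.1 ht), enorm_zero]),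
    lintegral_zero, add_zero]
  refine tsum_congr fun m => ?_
  rw [setLIntegral_congr_fun measurableSet_Ico (fun t ht => by rw [stepFun_of_mem_Ico g ht]),
    setLIntegral_const, Real.volume_Ico, add_sub_cancel_left, ENNReal.ofReal_one, mul_one]

theorem setLIntegral_Ico_enorm_stepFun_shift {s : ℝ} (hs0 : 0 ≤ s) (hs1 : s ≤ 1) (m : ℕ) :
    ∫⁻ t in Ico (m : ℝ) (m + 1), ‖stepFun g (t + s) - stepFun g t‖ₑ =
      ‖g (m + 1) - g m‖ₑ * ENNReal.ofReal s := by
  have hjump : ∀ t ∈ Ico (m : ℝ) (m + 1), ‖stepFun g (t + s) - stepFun g t‖ₑ =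
      (Ico ((m : ℝ) + 1 - s) (m + 1)).indicator (fun _ => ‖g (m + 1) - g m‖ₑ) t := by
    intro t ht
    rw [stepFun_of_mem_Ico g ht]
    by_cases hc : (m : ℝ) + 1 - s ≤ t
    · have hts : t + s ∈ Ico ((m + 1 : ℕ) : ℝ) ((m + 1 : ℕ) + 1) := by
        push_cast; constructor <;> linarith [ht.2]
      rw [stepFun_of_mem_Ico g hts, indicator_of_mem (mem_Ico.2 ⟨hc, ht.2⟩)]
    · have hts : t + s ∈ Ico (m : ℝ) (m + 1) := by constructor <;> linarith [ht.1]
      rw [stepFun_of_mem_Ico g hts, indicator_of_notMem (fun h => hc h.1), sub_self, enorm_zero]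
  rw [setLIntegral_congr_fun measurableSet_Ico hjump, setLIntegral_indicator measurableSet_Ico,
    inter_eq_left.2 (Ico_subset_Ico_left (by linarith)), setLIntegral_const, Real.volume_Ico,
    sub_sub_cancel]

variable {g}

theorem stepFun_nonneg (hg0 : ∀ m, 0 ≤ g m) : 0 ≤ stepFun g := fun t => by
  unfold stepFun
  split_ifs
  exacts [hg0 _, le_rfl]

theorem integrable_stepFun (hg : Summable g) : Integrable (stepFun g) :=
  ⟨(measurable_stepFun g).aestronglyMeasurable, by
    rw [HasFiniteIntegral, lintegral_enorm_stepFun]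
    refine (tsum_enorm_ne_top_iff_summable_norm.2 ?_).lt_top
    simpa only [Real.norm_eq_abs] using hg.abs⟩

theorem shiftL1_stepFun (hg : Summable g) {s : ℝ} (hs0 : 0 ≤ s) (hs1 : s ≤ 1) :
    shiftL1 (stepFun g) s = s * jumpSum g := by
  have hmeas : AEStronglyMeasurable (fun t => stepFun g (t + s) - stepFun g t)
      (volume.restrict (Ici 0)) :=
    ((measurable_stepFun g).comp (measurable_add_const s)).sub
      (measurable_stepFun g) |>.aestronglyMeasurable
  simp_rw [shiftL1, ← Real.norm_eq_abs]
  rw [integral_norm_eq_lintegral_enorm hmeas, setLIntegral_Ici_zero_eq_tsum]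
  simp_rw [setLIntegral_Ico_enorm_stepFun_shift g hs0 hs1, Real.enorm_eq_ofReal_abs]
  rw [ENNReal.tsum_mul_right, ← ENNReal.ofReal_tsum_of_nonneg (fun _ => abs_nonneg _)
    (summable_abs_sub_succ hg), ENNReal.toReal_mul, ENNReal.toReal_ofReal hs0,
    mul_comm]
  exact congrArg (s * ·) (ENNReal.toReal_ofReal (jumpSum_nonneg g))

theorem shiftL1_stepFun_le (hg : Summable g) {s : ℝ} (hs : 0 ≤ s) :
    shiftL1 (stepFun g) s ≤ s * jumpSum g := by
  have hmul : ∀ n : ℕ, ∀ r ∈ Icc (0 : ℝ) 1,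
      shiftL1 (stepFun g) (r + n) ≤ (r + n) * jumpSum g := by
    intro n
    induction n with
    | zero => intro r hr; simpa using (shiftL1_stepFun hg hr.1 hr.2).le
    | succ n ih =>
      intro r hr
      have hrn : 0 ≤ r + n := add_nonneg hr.1 n.cast_nonneg
      calc shiftL1 (stepFun g) (r + (n + 1 : ℕ)) = shiftL1 (stepFun g) (1 + (r + n)) := by
            push_cast; ring_nf
        _ ≤ shiftL1 (stepFun g) 1 + shiftL1 (stepFun g) (r + n) :=
            shiftL1_add_le (integrable_stepFun hg) 1 hrn
        _ ≤ 1 * jumpSum g + (r + n) * jumpSum g :=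
            add_le_add (shiftL1_stepFun hg zero_le_one le_rfl).le (ih r hr)
        _ = (r + (n + 1 : ℕ)) * jumpSum g := by push_cast; ring
  have hfract : s - ⌊s⌋₊ ∈ Icc (0 : ℝ) 1 :=
    ⟨sub_nonneg.2 (Nat.floor_le hs), by linarith [Nat.lt_floor_add_one s]⟩
  simpa using hmul ⌊s⌋₊ _ hfract

theorem TV_withDensity_stepFun_le (hg0 : ∀ m, 0 ≤ g m) (hg : Summable g) {s : ℝ}
    (hs : 0 ≤ s) :
    TV (volume.withDensity fun t => ENNReal.ofReal (stepFun g t)) s ≤ s * jumpSum g :=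
  (TV_withDensity_le_shiftL1 (integrable_stepFun hg) (stepFun_nonneg hg0) s).trans
    (shiftL1_stepFun_le hg hs)

theorem jumpSum_le_two_mul_TV_withDensity_stepFun (hg0 : ∀ m, 0 ≤ g m)
    (hg : Summable g) :
    jumpSum g ≤ 2 * TV (volume.withDensity fun t => ENNReal.ofReal (stepFun g t)) 1 := by
  simpa [shiftL1_stepFun hg zero_le_one le_rfl] using shiftL1_le_two_mul_TV_withDensity
    (measurable_stepFun g) (integrable_stepFun hg) (stepFun_nonneg hg0) 1

end StepFun

theorem ltc_step_densities (ξ : ℕ → ℕ → ℝ) (hξ0 : ∀ k m, 0 ≤ ξ k m)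
    (hξ1 : ∀ k, ∑' m, ξ k m = 1)
    (f : ℕ → ℝ → ℝ)
    (hf : ∀ k t, f k t = if 0 ≤ t then ξ k ⌊t⌋₊ else 0)
    (θ : ℕ → Measure ℝ)
    (hθ : ∀ k, θ k = volume.withDensity (fun t => ENNReal.ofReal (f k t))) :
    (∀ s ∈ Icc (0:ℝ) 1, ∀ k,
        ∫ t in Ici (0:ℝ), |f k (t + s) - f k t| = s * ∑' m, |ξ k (m + 1) - ξ k m|) ∧
    (LTC θ ↔ Tendsto (fun k => ∑' m, |ξ k (m + 1) - ξ k m|) atTop (nhds 0)) := by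
  have hF : ∀ k, f k = stepFun (ξ k) := fun k => funext (hf k)
  have hsum : ∀ k, Summable (ξ k) := fun k => by
    by_contra h
    simpa [tsum_eq_zero_of_not_summable h] using hξ1 k
  have hθF : ∀ k, θ k = volume.withDensity fun t => ENNReal.ofReal (stepFun (ξ k) t) :=
    fun k => by rw [hθ, hF]
  have hjump_le : ∀ k, jumpSum (ξ k) ≤ 2 * TV (θ k) 1 := fun k => by
    rw [hθF]; exact jumpSum_le_two_mul_TV_withDensity_stepFun (hξ0 k) (hsum k)
  have hsup_le : ∀ k, ∀ S, ∀ s : Icc (0 : ℝ) S, TV (θ k) s ≤ S * jumpSum (ξ k) := fun k S s => by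
    rw [hθF]
    exact (TV_withDensity_stepFun_le (hξ0 k) (hsum k) s.2.1).trans
      (mul_le_mul_of_nonneg_right s.2.2 (jumpSum_nonneg _))
  refine ⟨fun s hs k => by rw [hF]; exact shiftL1_stepFun (hsum k) hs.1 hs.2,
    fun hLTC => ?_, fun hjump S hS => ?_⟩
  · refine squeeze_zero (fun k => jumpSum_nonneg (ξ k)) (fun k => (hjump_le k).trans ?_)
      (by simpa using (hLTC 1 one_pos).const_mul 2)
    exact mul_le_mul_of_nonneg_left (le_ciSup (f := fun s : Icc (0 : ℝ) 1 => TV (θ k) s)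
      ⟨_, forall_mem_range.2 (hsup_le k 1)⟩ ⟨1, by simp⟩) zero_le_two
  · have := (nonempty_Icc.2 hS.le).to_subtype
    exact squeeze_zero (fun k => Real.iSup_nonneg fun s => TV_nonneg _ _)
      (fun k => ciSup_le (hsup_le k S)) (by simpa [jumpSum] using hjump.const_mul S)
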